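/- Let A be an n×n real symmetric matrix with nonnegative entries having at most one positive eigenvalue. Then for every nonempty subset S of {1,...,n}, the principal submatrix A[S] also has at most one positive eigenvalue, and (-1)^{|S|-1} det(A[S]) ≥ 0. -/

import Mathlib

/-!
If `B = Pᵀ A P` had two positive eigenvalues, the quadratic form of `B` would be positive definite
on the plane they span; the image of that plane under `P` meets the hyperplane orthogonal to the
(at most one) positive eigenvector of `A`, where the quadratic form of `A` is nonpositive.
A principal submatrix is such a congruence, with `P` a selection matrix. For the sign of the
determinant, the eigenvalues of `A[S]` sum to its trace, which is nonnegative: so either they all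
vanish, or exactly one is positive and the other `|S| - 1` are nonpositive.
-/

open Matrix Finset

lemma exists_dotProduct_add_smul_eq_zero {R n : Type*} [CommRing R] [Nontrivial R] [Fintype n]
    (v x y : n → R) : ∃ a b : R, (a ≠ 0 ∨ b ≠ 0) ∧ v ⬝ᵥ (a • x + b • y) = 0 := by
  by_cases h : v ⬝ᵥ x = 0 ∧ v ⬝ᵥ y = 0
  · exact ⟨1, 0, .inl one_ne_zero, by simp [h.1]⟩
  · refine ⟨v ⬝ᵥ y, -(v ⬝ᵥ x), ?_, ?_⟩
    · rw [neg_ne_zero]; tauto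
    · simp only [dotProduct_add, dotProduct_smul, smul_eq_mul]; ring

lemma neg_one_pow_card_sub_one_mul_prod_nonneg {m : Type*} [Fintype m] [DecidableEq m]
    (μ : m → ℝ) (hpos : #{i | 0 < μ i} ≤ 1) (hsum : 0 ≤ ∑ i, μ i) :
    0 ≤ (-1) ^ (Fintype.card m - 1) * ∏ i, μ i := by
  by_cases h : ∃ i, 0 < μ i
  · obtain ⟨i₀, hi₀⟩ := h
    have hrest : ∀ j ∈ univ.erase i₀, 0 ≤ -μ j := fun j hj => by
      have : ¬ 0 < μ j := fun hj' => ne_of_mem_erase hj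
        (card_le_one.mp hpos j (by simpa) i₀ (by simpa))
      linarith
    calc 0 ≤ μ i₀ * ∏ j ∈ univ.erase i₀, -μ j := mul_nonneg hi₀.le (prod_nonneg hrest)
      _ = (-1) ^ (Fintype.card m - 1) * ∏ i, μ i := by
        rw [prod_neg, card_erase_of_mem (mem_univ _), card_univ, ← mul_prod_erase univ μ
          (mem_univ i₀)]
        ring
  · push Not at h
    have hzero : ∀ i, μ i = 0 := fun i =>
      (sum_eq_zero_iff_of_nonpos fun i _ => h i).mp (le_antisymm (sum_nonpos fun i _ => h i) hsum)
        i (mem_univ i)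
    rcases isEmpty_or_nonempty m with _ | ⟨⟨i⟩⟩
    · simp
    · simp [prod_eq_zero (mem_univ i) (hzero i)]

namespace Matrix.IsHermitian

variable {n : Type*} [Fintype n] [DecidableEq n] {A : Matrix n n ℝ}

lemma dotProduct_eigenvectorBasis (hA : A.IsHermitian) (k l : n) :
    ⇑(hA.eigenvectorBasis k) ⬝ᵥ ⇑(hA.eigenvectorBasis l) = if k = l then 1 else 0 := by
  rw [← hA.eigenvectorBasis.inner_eq_ite, EuclideanSpace.inner_eq_star_dotProduct, star_trivial]
  exact dotProduct_comm _ _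

lemma dotProduct_mulVec_eq_sum_eigenvalues (hA : A.IsHermitian) (x : n → ℝ) :
    x ⬝ᵥ (A *ᵥ x) = ∑ k, hA.eigenvalues k * (⇑(hA.eigenvectorBasis k) ⬝ᵥ x) ^ 2 := by
  have h := hA.eigenvectorBasis.sum_inner_mul_inner (WithLp.toLp 2 x) (WithLp.toLp 2 (A *ᵥ x))
  simp only [EuclideanSpace.inner_eq_star_dotProduct, star_trivial] at h
  rw [dotProduct_comm, ← h]
  refine Finset.sum_congr rfl fun k _ => ?_
  have hAt : Aᵀ = A := by rw [← conjTranspose_eq_transpose_of_trivial, hA.eq]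
  rw [dotProduct_comm (A *ᵥ x), dotProduct_mulVec, ← mulVec_transpose, hAt,
    hA.mulVec_eigenvectorBasis, smul_dotProduct, smul_eq_mul]
  ring

lemma dotProduct_mulVec_nonpos_of_forall_eigenvalues_pos (hA : A.IsHermitian) {x : n → ℝ}
    (hx : ∀ k, 0 < hA.eigenvalues k → ⇑(hA.eigenvectorBasis k) ⬝ᵥ x = 0) :
    x ⬝ᵥ (A *ᵥ x) ≤ 0 := by
  rw [hA.dotProduct_mulVec_eq_sum_eigenvalues]
  refine sum_nonpos fun k _ => ?_
  rcases lt_or_ge 0 (hA.eigenvalues k) with hk | hk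
  · simp [hx k hk]
  · exact mul_nonpos_of_nonpos_of_nonneg hk (sq_nonneg _)

lemma exists_forall_dotProduct_eq_zero_dotProduct_mulVec_nonpos (hA : A.IsHermitian)
    (hpos : #{i | 0 < hA.eigenvalues i} ≤ 1) :
    ∃ v : n → ℝ, ∀ x, v ⬝ᵥ x = 0 → x ⬝ᵥ (A *ᵥ x) ≤ 0 := by
  by_cases h : ∃ k, 0 < hA.eigenvalues k
  · obtain ⟨k₀, hk₀⟩ := h
    refine ⟨hA.eigenvectorBasis k₀, fun x hx =>
      hA.dotProduct_mulVec_nonpos_of_forall_eigenvalues_pos fun k hk => ?_⟩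
    rwa [card_le_one.mp hpos k (by simpa) k₀ (by simpa)]
  · push Not at h
    exact ⟨0, fun x _ => hA.dotProduct_mulVec_nonpos_of_forall_eigenvalues_pos
      fun k hk => absurd hk (h k).not_gt⟩

lemma dotProduct_mulVec_pos_of_eigenvalues_pos (hA : A.IsHermitian) {i j : n} (hij : i ≠ j)
    (hi : 0 < hA.eigenvalues i) (hj : 0 < hA.eigenvalues j) {a b : ℝ} (hab : a ≠ 0 ∨ b ≠ 0) :
    0 < (a • ⇑(hA.eigenvectorBasis i) + b • ⇑(hA.eigenvectorBasis j)) ⬝ᵥ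
      (A *ᵥ (a • ⇑(hA.eigenvectorBasis i) + b • ⇑(hA.eigenvectorBasis j))) := by
  have hquad : (a • ⇑(hA.eigenvectorBasis i) + b • ⇑(hA.eigenvectorBasis j)) ⬝ᵥ
      (A *ᵥ (a • ⇑(hA.eigenvectorBasis i) + b • ⇑(hA.eigenvectorBasis j))) =
      hA.eigenvalues i * a ^ 2 + hA.eigenvalues j * b ^ 2 := by
    simp only [mulVec_add, mulVec_smul, hA.mulVec_eigenvectorBasis, dotProduct_add,
      add_dotProduct, dotProduct_smul, smul_dotProduct, hA.dotProduct_eigenvectorBasis,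
      if_true, if_neg hij, if_neg hij.symm, smul_eq_mul]
    ring
  rw [hquad]
  rcases hab with ha | hb
  · have : 0 < a ^ 2 := by positivity
    positivity
  · have : 0 < b ^ 2 := by positivity
    positivity

variable {m : Type*} [Fintype m] [DecidableEq m]

theorem card_filter_eigenvalues_pos_le_one_of_eq_transpose_mul_mul {B : Matrix m m ℝ}
    (hA : A.IsHermitian) (hB : B.IsHermitian) {P : Matrix n m ℝ} (hBA : B = Pᵀ * A * P)
    (hpos : #{i | 0 < hA.eigenvalues i} ≤ 1) : #{i | 0 < hB.eigenvalues i} ≤ 1 := by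
  by_contra! h
  obtain ⟨i, hi, j, hj, hij⟩ := one_lt_card.mp h
  simp only [mem_filter, mem_univ, true_and] at hi hj
  have hquad (z : m → ℝ) : z ⬝ᵥ (B *ᵥ z) = (P *ᵥ z) ⬝ᵥ (A *ᵥ (P *ᵥ z)) := by
    rw [hBA, ← mulVec_mulVec, ← mulVec_mulVec, dotProduct_mulVec, vecMul_transpose]
  obtain ⟨v, hv⟩ := hA.exists_forall_dotProduct_eq_zero_dotProduct_mulVec_nonpos hpos
  obtain ⟨a, b, hab, hz⟩ := exists_dotProduct_add_smul_eq_zero v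
    (P *ᵥ hB.eigenvectorBasis i) (P *ᵥ hB.eigenvectorBasis j)
  rw [← mulVec_smul, ← mulVec_smul, ← mulVec_add] at hz
  have hnonpos := hv _ hz
  rw [← hquad] at hnonpos
  exact (hB.dotProduct_mulVec_pos_of_eigenvalues_pos hij hi hj hab).not_ge hnonpos

theorem card_filter_eigenvalues_submatrix_pos_le_one (hA : A.IsHermitian)
    (hpos : #{i | 0 < hA.eigenvalues i} ≤ 1) (e : m → n) :
    #{i | 0 < (hA.submatrix e).eigenvalues i} ≤ 1 :=
  card_filter_eigenvalues_pos_le_one_of_eq_transpose_mul_mul hA (hA.submatrix e)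
    (P := (1 : Matrix n n ℝ).submatrix id e) (by ext; simp [mul_apply, one_apply]) hpos

theorem neg_one_pow_mul_det_nonneg (hA : A.IsHermitian) (hpos : #{i | 0 < hA.eigenvalues i} ≤ 1)
    (htrace : 0 ≤ A.trace) : 0 ≤ (-1) ^ (Fintype.card n - 1) * A.det := by
  rw [hA.det_eq_prod_eigenvalues]
  rw [hA.trace_eq_sum_eigenvalues] at htrace
  simpa using neg_one_pow_card_sub_one_mul_prod_nonneg _ hpos (by simpa using htrace)

end Matrix.IsHermitian

/-- If a real symmetric (Hermitian) matrix with nonnegative entries has at most one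
positive eigenvalue, then every principal submatrix `A[S]` (for nonempty `S`) has at most one
positive eigenvalue, and `(-1)^(|S|-1) det(A[S]) ≥ 0`. -/
theorem stmt1 {n : ℕ} (A : Matrix (Fin n) (Fin n) ℝ) (hA : A.IsHermitian)
    (hnn : ∀ i j, 0 ≤ A i j)
    (hpos : (Finset.univ.filter fun i => 0 < hA.eigenvalues i).card ≤ 1) :
    ∀ S : Finset (Fin n), S.Nonempty →
      (Finset.univ.filter fun i =>
        0 < (hA.submatrix (fun i : {x // x ∈ S} => (i : Fin n))).eigenvalues i).card ≤ 1 ∧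
      0 ≤ (-1 : ℝ) ^ (S.card - 1) *
        (A.submatrix (fun i : {x // x ∈ S} => (i : Fin n))
          (fun i : {x // x ∈ S} => (i : Fin n))).det := by
  intro S _
  have hsub := hA.card_filter_eigenvalues_submatrix_pos_le_one hpos ((↑) : S → Fin n)
  refine ⟨hsub, ?_⟩
  have htrace : 0 ≤ (A.submatrix ((↑) : S → Fin n) (↑)).trace :=
    sum_nonneg fun i _ => hnn i i
  simpa using (hA.submatrix _).neg_one_pow_mul_det_nonneg hsub htrace
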